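/- arXiv:2407.05541 — 10 statements merged into one kernel-verified Lean document; each statement's English description precedes it below -/
import Mathlib

section
/- If for some fixed θ ∈ [0, 2π) the relation ⊥_{T_θ} is left symmetric at x (i.e., (T_θ x, y) = 0 implies (T_θ y, x) = 0 for all y), then ⊥_T is left symmetric at x (i.e., (Tx)(y) = 0 implies (Ty)(x) = 0 for all y). -/
open NormedSpace

/-- `(T_θ x, y) = cos θ · Re (Tx)(y) + sin θ · Im (Tx)(y)`. -/
noncomputable def Tangle {X : Type*} [NormedAddCommGroup X] [NormedSpace ℂ X]
    (T : X →L[ℂ] StrongDual ℂ X) (θ : ℝ) (x y : X) : ℝ :=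
  Real.cos θ * (T x y).re + Real.sin θ * (T x y).im

/-!
`(T_θ x, y)` is the real part of `e^{-iθ} (Tx)(y)`. Orthogonality `x ⊥_T y` is inherited by `i y`,
so left symmetry of `⊥_{T_θ}` at `x` gives `Re (e^{-iθ} (Ty)(x)) = 0` and, by complex linearity of
`T`, `Re (i e^{-iθ} (Ty)(x)) = 0`; hence `(Ty)(x) = 0`.
-/

open Complex in
lemma Complex.eq_zero_of_cos_mul_re_add_sin_mul_im {θ : ℝ} {z : ℂ}
    (h : Real.cos θ * z.re + Real.sin θ * z.im = 0)
    (hI : Real.cos θ * (I * z).re + Real.sin θ * (I * z).im = 0) : z = 0 := by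
  simp only [mul_re, mul_im, I_re, I_im] at hI
  have hs := Real.sin_sq_add_cos_sq θ
  have hre : z.re = 0 := by
    linear_combination Real.cos θ * h + Real.sin θ * hI - z.re * hs
  have him : z.im = 0 := by
    linear_combination Real.sin θ * h - Real.cos θ * hI - z.im * hs
  exact Complex.ext hre him

lemma Tangle_eq_zero_of_apply_eq_zero {X : Type*} [NormedAddCommGroup X] [NormedSpace ℂ X]
    {T : X →L[ℂ] StrongDual ℂ X} (θ : ℝ) {x y : X} (h : T x y = 0) : Tangle T θ x y = 0 := by
  simp [Tangle, h]

lemma Tangle_I_smul_left {X : Type*} [NormedAddCommGroup X] [NormedSpace ℂ X]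
    (T : X →L[ℂ] StrongDual ℂ X) (θ : ℝ) (x y : X) :
    Tangle T θ (Complex.I • x) y =
      Real.cos θ * (Complex.I * T x y).re + Real.sin θ * (Complex.I * T x y).im := by
  simp [Tangle]

theorem stmt4_general {X : Type*} [NormedAddCommGroup X] [NormedSpace ℂ X]
    (T : X →L[ℂ] StrongDual ℂ X) (x : X) (θ : ℝ)
    (hleft : ∀ y : X, Tangle T θ x y = 0 → Tangle T θ y x = 0) :
    ∀ y : X, T x y = 0 → T y x = 0 := by
  intro y hxy
  have hIy : T x (Complex.I • y) = 0 := by simp [hxy]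
  apply Complex.eq_zero_of_cos_mul_re_add_sin_mul_im (θ := θ)
  · exact hleft y (Tangle_eq_zero_of_apply_eq_zero θ hxy)
  · rw [← Tangle_I_smul_left]
    exact hleft _ (Tangle_eq_zero_of_apply_eq_zero θ hIy)

theorem stmt4 {X : Type*} [NormedAddCommGroup X] [NormedSpace ℂ X] [CompleteSpace X]
    (T : X →L[ℂ] StrongDual ℂ X) (x : X) (θ : ℝ) (hθ : θ ∈ Set.Ico 0 (2 * Real.pi))
    (hleft : ∀ y : X, Tangle T θ x y = 0 → Tangle T θ y x = 0) :
    ∀ y : X, T x y = 0 → T y x = 0 :=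
  stmt4_general T x θ hleft
end

section
/- Let x ∈ X be a nonisotropic vector, i.e., (Tx)(x) ≠ 0. Then ⊥_T is left symmetric at x if and only if ⊥_T is right symmetric at x. -/
open NormedSpace

/-- Left symmetry at `x` applies to `z = B x x • y - B x y • x`, which is right orthogonal
to `x`; if `B y x = 0` this gives `B x y * B x x = 0`. -/
theorem LinearMap.rightSymmetric_of_leftSymmetric_of_apply_self_ne_zero {R M : Type*}
    [CommRing R] [NoZeroDivisors R] [AddCommGroup M] [Module R M] (B : M →ₗ[R] M →ₗ[R] R)
    {x : M} (hx : B x x ≠ 0) (hleft : ∀ z, B x z = 0 → B z x = 0) :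
    ∀ y, B y x = 0 → B x y = 0 := by
  intro y hyx
  have hz : B (B x x • y - B x y • x) x = 0 := hleft _ (by simp [mul_comm])
  simpa only [map_sub, map_smul, LinearMap.sub_apply, LinearMap.smul_apply, hyx, smul_eq_mul,
    mul_zero, zero_sub, neg_eq_zero, mul_eq_zero, hx, or_false] using hz

theorem stmt5_general {X : Type*} [NormedAddCommGroup X] [NormedSpace ℂ X]
    (T : X →L[ℂ] StrongDual ℂ X) (x : X) (hx : T x x ≠ 0) :
    (∀ y : X, T x y = 0 → T y x = 0) ↔ (∀ y : X, T y x = 0 → T x y = 0) := by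
  let B : X →ₗ[ℂ] X →ₗ[ℂ] ℂ := ContinuousLinearMap.toLinearMap₁₂ T
  exact ⟨B.rightSymmetric_of_leftSymmetric_of_apply_self_ne_zero hx,
    B.flip.rightSymmetric_of_leftSymmetric_of_apply_self_ne_zero hx⟩

theorem stmt5 {X : Type*} [NormedAddCommGroup X] [NormedSpace ℂ X] [CompleteSpace X]
    (T : X →L[ℂ] StrongDual ℂ X) (x : X) (hx : T x x ≠ 0) :
    (∀ y : X, T x y = 0 → T y x = 0) ↔ (∀ y : X, T y x = 0 → T x y = 0) :=
  stmt5_general T x hx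
end

section
/- Suppose T : X → X* is bijective and x ∈ X is a nonzero isotropic vector, i.e., x ≠ 0 and (Tx)(x) = 0. Then ⊥_T is left symmetric at x if and only if ⊥_T is right symmetric at x. -/
/-! Left symmetry at `x` says `ker (T x) ⊆ ker (y ↦ T y x)`, right symmetry the reverse inclusion.
The kernel of a nonzero functional is a maximal subspace, so for two nonzero functionals either
inclusion forces equality. `T x ≠ 0` by injectivity, and `y ↦ T y x ≠ 0` because by surjectivity
every functional, in particular one not vanishing at `x` (Hahn–Banach), is of the form `T y`. -/

theorem LinearMap.ker_le_ker_iff_ker_le_ker {R M N : Type*} [Ring R] [AddCommGroup M] [Module R M]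
    [AddCommGroup N] [Module R N] [IsSimpleModule R N] {f g : M →ₗ[R] N} (hf : f ≠ 0)
    (hg : g ≠ 0) : ker f ≤ ker g ↔ ker g ≤ ker f := by
  have hf_coatom := isCoatom_ker_of_surjective (surjective_of_ne_zero hf)
  have hg_coatom := isCoatom_ker_of_surjective (surjective_of_ne_zero hg)
  rw [hf_coatom.le_iff_eq (mt ker_eq_top.mp hg), hg_coatom.le_iff_eq (mt ker_eq_top.mp hf), eq_comm]

theorem stmt6_general {X : Type*} [NormedAddCommGroup X] [NormedSpace ℂ X]
    (T : X →L[ℂ] StrongDual ℂ X) (hT : Function.Bijective T)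
    (x : X) (hx : x ≠ 0) :
    (∀ y : X, T x y = 0 → T y x = 0) ↔ (∀ y : X, T y x = 0 → T x y = 0) := by
  let g : X →L[ℂ] ℂ := (ContinuousLinearMap.apply ℂ ℂ x).comp T
  have hTx : (T x : X →ₗ[ℂ] ℂ) ≠ 0 :=
    ContinuousLinearMap.coe_injective.ne_iff' ContinuousLinearMap.toLinearMap_zero |>.mpr <|
      (map_ne_zero_iff T hT.injective).mpr hx
  have hg : (g : X →ₗ[ℂ] ℂ) ≠ 0 := by
    obtain ⟨φ, hφ⟩ := SeparatingDual.exists_ne_zero (R := ℂ) hx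
    obtain ⟨z, rfl⟩ := hT.surjective φ
    exact fun h ↦ hφ (LinearMap.congr_fun h z)
  exact LinearMap.ker_le_ker_iff_ker_le_ker hTx hg

theorem stmt6 {X : Type*} [NormedAddCommGroup X] [NormedSpace ℂ X] [CompleteSpace X]
    (T : X →L[ℂ] StrongDual ℂ X) (hT : Function.Bijective T)
    (x : X) (hx : x ≠ 0) (hiso : T x x = 0) :
    (∀ y : X, T x y = 0 → T y x = 0) ↔ (∀ y : X, T y x = 0 → T x y = 0) :=
  stmt6_general T hT x hx
end

section
/- Let x ∈ X be nonisotropic, i.e., (Tx)(x) ≠ 0, and suppose ⊥_T is left symmetric at x. Then (Tx)(y) = (Ty)(x) for all y ∈ X. -/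
/-- Apply left symmetry to `y - (B x y / B x x) • x`, which is `B`-orthogonal to `x` from the right. -/
theorem LinearMap.BilinForm.apply_eq_apply_swap_of_eq_zero_imp {K M : Type*} [Field K]
    [AddCommGroup M] [Module K M] (B : LinearMap.BilinForm K M) {x : M} (hx : B x x ≠ 0)
    (hleft : ∀ y, B x y = 0 → B y x = 0) (y : M) : B x y = B y x := by
  set c := B x y / B x x
  have hc : c * B x x = B x y := div_mul_cancel₀ _ hx
  have hortho : B x (y - c • x) = 0 := by
    rw [map_sub, map_smul, smul_eq_mul, hc, sub_self]
  have hswap := hleft _ hortho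
  rw [map_sub, map_smul, LinearMap.sub_apply, LinearMap.smul_apply, smul_eq_mul, hc,
    sub_eq_zero] at hswap
  exact hswap.symm

theorem stmt7_general {X : Type*} [NormedAddCommGroup X] [NormedSpace ℂ X]
    (T : X →L[ℂ] StrongDual ℂ X) (x : X) (hx : T x x ≠ 0)
    (hleft : ∀ y : X, T x y = 0 → T y x = 0) :
    ∀ y : X, T x y = T y x :=
  LinearMap.BilinForm.apply_eq_apply_swap_of_eq_zero_imp
    ((ContinuousLinearMap.coeLM ℂ).comp T.toLinearMap) hx hleft

theorem stmt7 {X : Type*} [NormedAddCommGroup X] [NormedSpace ℂ X] [CompleteSpace X]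
    (T : X →L[ℂ] StrongDual ℂ X) (x : X) (hx : T x x ≠ 0)
    (hleft : ∀ y : X, T x y = 0 → T y x = 0) :
    ∀ y : X, T x y = T y x :=
  stmt7_general T x hx hleft
end

section
/- Let T : X → X* be a nonzero bounded linear operator. Then T is symmetric (i.e., (Tx)(y) = (Ty)(x) for all x, y) if and only if (i) there exists a nonisotropic vector x ∈ X (i.e., (Tx)(x) ≠ 0), and (ii) ⊥_T is left symmetric at every nonisotropic vector y ∈ X. -/
/-!
If `B y y ≠ 0`, every `z` splits as `z = c • y + w` with `B y w = 0`, so left symmetry of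
orthogonality at `y` forces `B z y = B y z`. A single nonisotropic `x₀` spreads this to all
of `M`: for any `y`, the quadratic `t ↦ B (y + t • x₀) (y + t • x₀)` has leading coefficient
`B x₀ x₀ ≠ 0`, so some `y + t • x₀` is nonisotropic, and comparing symmetry at `y + t • x₀`
and at `x₀` gives symmetry at `y`. Conversely a nonzero symmetric form has a nonisotropic
vector by polarization.
-/

namespace LinearMap.BilinForm

variable {K M : Type*} [Field K] [AddCommGroup M] [Module K M] (B : LinearMap.BilinForm K M)

/-- Orthogonality `⊥_B` is left symmetric at `y`. -/
def IsLeftSymmAt (y : M) : Prop :=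
  ∀ z, B y z = 0 → B z y = 0

variable {B}

theorem apply_comm_of_isLeftSymmAt {y : M} (hy : B y y ≠ 0) (h : B.IsLeftSymmAt y) (z : M) :
    B z y = B y z := by
  have hortho : B y (z - (B y z / B y y) • y) = 0 := by
    simp only [map_sub, map_smul, smul_eq_mul]
    field_simp
    ring
  have h' := h _ hortho
  simp only [map_sub, map_smul, LinearMap.sub_apply, LinearMap.smul_apply, smul_eq_mul] at h'
  calc B z y = B y z / B y y * B y y := by linear_combination h'
    _ = B y z := div_mul_cancel₀ _ hy

theorem exists_add_smul_apply_self_ne_zero [NeZero (2 : K)] {x₀ : M} (hx₀ : B x₀ x₀ ≠ 0)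
    (y : M) : ∃ t : K, B (y + t • x₀) (y + t • x₀) ≠ 0 := by
  have expand (t : K) : B (y + t • x₀) (y + t • x₀) =
      B y y + t * (B y x₀ + B x₀ y) + t ^ 2 * B x₀ x₀ := by
    simp only [map_add, map_smul, LinearMap.add_apply, LinearMap.smul_apply, smul_eq_mul]
    ring
  by_contra! h
  have e0 := expand 0
  have e1 := expand 1
  have e2 := expand 2
  rw [h] at e0 e1 e2
  -- second finite difference of the quadratic at `0, 1, 2`
  have : (2 : K) * B x₀ x₀ = 0 := by linear_combination 2 * e1 - e0 - e2
  exact hx₀ ((mul_eq_zero.mp this).resolve_left two_ne_zero)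

theorem isSymm_of_forall_isLeftSymmAt [NeZero (2 : K)] {x₀ : M} (hx₀ : B x₀ x₀ ≠ 0)
    (h : ∀ y, B y y ≠ 0 → B.IsLeftSymmAt y) : B.IsSymm := by
  refine isSymm_def.mpr fun y x ↦ ?_
  obtain ⟨t, ht⟩ := exists_add_smul_apply_self_ne_zero hx₀ y
  have hyt := apply_comm_of_isLeftSymmAt ht (h _ ht) x
  have hx₀x := apply_comm_of_isLeftSymmAt hx₀ (h _ hx₀) x
  simp only [map_add, map_smul, LinearMap.add_apply, LinearMap.smul_apply, smul_eq_mul]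
    at hyt
  linear_combination t * hx₀x - hyt

theorem isSymm_iff_exists_and_forall_isLeftSymmAt [NeZero (2 : K)] (hB : B ≠ 0) :
    B.IsSymm ↔ (∃ x, B x x ≠ 0) ∧ ∀ y, B y y ≠ 0 → B.IsLeftSymmAt y := by
  refine ⟨fun hsymm ↦ ⟨?_, fun y _ ↦ hsymm.isRefl y⟩,
    fun ⟨⟨x₀, hx₀⟩, h⟩ ↦ isSymm_of_forall_isLeftSymmAt hx₀ h⟩
  have : Invertible (2 : K) := invertibleOfNonzero two_ne_zero
  exact exists_bilinForm_self_ne_zero hB (isSymm_iff.mp hsymm)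

end LinearMap.BilinForm

open NormedSpace

theorem stmt8_general {X : Type*} [NormedAddCommGroup X] [NormedSpace ℂ X]
    (T : X →L[ℂ] StrongDual ℂ X) (hT : T ≠ 0) :
    (∀ x y : X, T x y = T y x) ↔
      ((∃ x : X, T x x ≠ 0) ∧
        ∀ y : X, T y y ≠ 0 → ∀ z : X, T y z = 0 → T z y = 0) := by
  have hB : T.toBilinForm ≠ 0 := fun h ↦ hT (ContinuousLinearMap.toBilinForm_injective h)
  simpa [LinearMap.BilinForm.isSymm_def, LinearMap.BilinForm.IsLeftSymmAt] using
    LinearMap.BilinForm.isSymm_iff_exists_and_forall_isLeftSymmAt hB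

theorem stmt8 {X : Type*} [NormedAddCommGroup X] [NormedSpace ℂ X] [CompleteSpace X]
    (T : X →L[ℂ] StrongDual ℂ X) (hT : T ≠ 0) :
    (∀ x y : X, T x y = T y x) ↔
      ((∃ x : X, T x x ≠ 0) ∧
        ∀ y : X, T y y ≠ 0 → ∀ z : X, T y z = 0 → T z y = 0) :=
  stmt8_general T hT
end

section
/- ⊥_T is left symmetric at x ∈ X if and only if there exists φ₀ ∈ [0, 2π) such that for every θ ∈ [0, 2π) and every y ∈ X: (T_θ x, y) ≥ 0 implies (T_{θ-φ₀} y, x) ≥ 0, and (T_θ x, y) ≤ 0 implies (T_{θ-φ₀} y, x) ≤ 0. -/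
/-!
Left symmetry at `x` says `ker (Tx) ⊆ ker (y ↦ (Ty, x))`, so `(Ty, x) = λ (Tx, y)` for a fixed
`λ ∈ ℂ`. Since `(T_θ x, y) = Re (e^{-iθ} (Tx, y))`, choosing `φ₀` with `e^{iφ₀} λ = |λ|` gives
`(T_{θ-φ₀} y, x) = |λ| (T_θ x, y)`, which has the sign of `(T_θ x, y)`.
Conversely, if `(Tx, y) = 0` then `(T_θ x, y) = 0` for all `θ`, so the sign conditions force
`(T_ψ y, x) = 0` for all `ψ` (by `2π`-periodicity), and `ψ = 0, π/2` give `(Ty, x) = 0`.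
-/

open NormedSpace

open Real
open Complex (I arg)

theorem LinearMap.exists_smul_eq_of_ker_le {𝕜 E : Type*} [Field 𝕜] [AddCommGroup E] [Module 𝕜 E]
    {f g : E →ₗ[𝕜] 𝕜} (h : LinearMap.ker f ≤ LinearMap.ker g) : ∃ c : 𝕜, c • f = g := by
  have hg : g ∈ Submodule.span 𝕜 (Set.range fun _ : Unit ↦ f) :=
    mem_span_of_iInf_ker_le_ker (by simpa only [iInf_const] using h)
  rwa [Set.range_const, Submodule.mem_span_singleton] at hg

theorem Complex.exists_mem_Ico_exp_mul_I_mul_eq_norm (c : ℂ) :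
    ∃ φ ∈ Set.Ico 0 (2 * π), Complex.exp (φ * I) * c = ‖c‖ := by
  have hper : Function.Periodic (fun φ : ℝ ↦ Complex.exp (φ * I)) (2 * π) := fun φ ↦ by
    simpa using Complex.exp_mul_I_periodic φ
  obtain ⟨φ, hφ, hexp⟩ := hper.exists_mem_Ico₀ two_pi_pos (-arg c)
  refine ⟨φ, hφ, ?_⟩
  rw [← hexp]
  nth_rw 2 [← Complex.norm_mul_exp_arg_mul_I c]
  rw [mul_left_comm, ← Complex.exp_add]
  simp

section Tangle

variable {X : Type*} [NormedAddCommGroup X] [NormedSpace ℂ X] (T : X →L[ℂ] StrongDual ℂ X)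

theorem tangle_eq_re_exp_mul (θ : ℝ) (x y : X) :
    Tangle T θ x y = (Complex.exp ((-θ : ℝ) * I) * T x y).re := by
  rw [Complex.mul_re, Complex.exp_ofReal_mul_I_re, Complex.exp_ofReal_mul_I_im, cos_neg, sin_neg,
    Tangle]
  ring

theorem tangle_periodic (x y : X) : Function.Periodic (fun θ ↦ Tangle T θ x y) (2 * π) := by
  intro θ
  simp only [Tangle, cos_add_two_pi, sin_add_two_pi]

theorem forall_tangle_eq_zero_iff (x y : X) : (∀ θ, Tangle T θ x y = 0) ↔ T x y = 0 := by
  refine ⟨fun h ↦ Complex.ext ?_ ?_, fun h θ ↦ by simp [Tangle, h]⟩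
  · simpa [Tangle] using h 0
  · simpa [Tangle] using h (π / 2)

theorem exists_apply_eq_mul_of_leftSymmetric {x : X} (h : ∀ y, T x y = 0 → T y x = 0) :
    ∃ c : ℂ, ∀ y, T y x = c * T x y := by
  obtain ⟨c, hc⟩ := LinearMap.exists_smul_eq_of_ker_le
    (f := (T x : X →ₗ[ℂ] ℂ)) (g := (T.flip x : X →ₗ[ℂ] ℂ)) fun y ↦ h y
  exact ⟨c, fun y ↦ (LinearMap.congr_fun hc y).symm⟩

theorem tangle_sub_eq_norm_mul {x y : X} {c : ℂ} {φ : ℝ} (hc : T y x = c * T x y)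
    (hφ : Complex.exp (φ * I) * c = ‖c‖) (θ : ℝ) :
    Tangle T (θ - φ) y x = ‖c‖ * Tangle T θ x y := by
  rw [tangle_eq_re_exp_mul, tangle_eq_re_exp_mul, hc, ← Complex.re_ofReal_mul, ← hφ]
  congr 1
  rw [neg_sub, sub_eq_add_neg, Complex.ofReal_add, add_mul, Complex.exp_add]
  ring

end Tangle

theorem stmt12_general {X : Type*} [NormedAddCommGroup X] [NormedSpace ℂ X]
    (T : X →L[ℂ] StrongDual ℂ X) (x : X) :
    (∀ y : X, T x y = 0 → T y x = 0) ↔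
      ∃ φ₀ : ℝ, φ₀ ∈ Set.Ico 0 (2 * Real.pi) ∧
        ∀ θ : ℝ, θ ∈ Set.Ico 0 (2 * Real.pi) → ∀ y : X,
          (0 ≤ Tangle T θ x y → 0 ≤ Tangle T (θ - φ₀) y x) ∧
          (Tangle T θ x y ≤ 0 → Tangle T (θ - φ₀) y x ≤ 0) := by
  constructor
  · intro h
    obtain ⟨c, hc⟩ := exists_apply_eq_mul_of_leftSymmetric T h
    obtain ⟨φ₀, hφ₀, hφ₀c⟩ := Complex.exists_mem_Ico_exp_mul_I_mul_eq_norm c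
    refine ⟨φ₀, hφ₀, fun θ _ y ↦ ?_⟩
    rw [tangle_sub_eq_norm_mul T (hc y) hφ₀c]
    exact ⟨mul_nonneg (norm_nonneg c), mul_nonpos_of_nonneg_of_nonpos (norm_nonneg c)⟩
  · rintro ⟨φ₀, -, hsign⟩ y hxy
    have hzero : ∀ θ ∈ Set.Ico 0 (2 * π), Tangle T (θ - φ₀) y x = 0 := fun θ hθ ↦
      have hθ₀ : Tangle T θ x y = 0 := (forall_tangle_eq_zero_iff T x y).2 hxy θ
      le_antisymm ((hsign θ hθ y).2 hθ₀.le) ((hsign θ hθ y).1 hθ₀.ge)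
    refine (forall_tangle_eq_zero_iff T y x).1 fun ψ ↦ ?_
    obtain ⟨θ, hθ, hψθ⟩ :=
      ((tangle_periodic T y x).sub_const φ₀).exists_mem_Ico₀ two_pi_pos (ψ + φ₀)
    simpa only [add_sub_cancel_right, ← hψθ] using hzero θ hθ

theorem stmt12 {X : Type*} [NormedAddCommGroup X] [NormedSpace ℂ X] [CompleteSpace X]
    (T : X →L[ℂ] StrongDual ℂ X) (x : X) :
    (∀ y : X, T x y = 0 → T y x = 0) ↔
      ∃ φ₀ : ℝ, φ₀ ∈ Set.Ico 0 (2 * Real.pi) ∧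
        ∀ θ : ℝ, θ ∈ Set.Ico 0 (2 * Real.pi) → ∀ y : X,
          (0 ≤ Tangle T θ x y → 0 ≤ Tangle T (θ - φ₀) y x) ∧
          (Tangle T θ x y ≤ 0 → Tangle T (θ - φ₀) y x ≤ 0) :=
  stmt12_general T x
end

section
/- Let X be a real Banach space, T : X → X* bounded linear, and x ∈ X. Then ⊥_T is left symmetric at x if and only if either (i) for all y: (Tx)(y) ≥ 0 implies (Ty)(x) ≥ 0 and (Tx)(y) ≤ 0 implies (Ty)(x) ≤ 0, or (ii) for all y: (Tx)(y) ≥ 0 implies (Ty)(x) ≤ 0 and (Tx)(y) ≤ 0 implies (Ty)(x) ≥ 0. -/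
open NormedSpace

namespace LinearMap

variable {𝕜 E : Type*} [Field 𝕜] [AddCommGroup E] [Module 𝕜 E]

theorem exists_smul_eq_of_ker_le_s13 {f g : E →ₗ[𝕜] 𝕜} (h : ker f ≤ ker g) :
    ∃ c : 𝕜, c • f = g := by
  have hg : g ∈ Submodule.span 𝕜 (Set.range fun _ : Unit => f) :=
    mem_span_of_iInf_ker_le_ker (by simpa using h)
  rwa [Set.range_const, Submodule.mem_span_singleton] at hg

/-- `g` vanishes on `ker f` iff it is a nonnegative or a nonpositive multiple of `f`. -/
theorem ker_le_ker_iff_sign [LinearOrder 𝕜] [IsStrictOrderedRing 𝕜]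
    (f g : E →ₗ[𝕜] 𝕜) : ker f ≤ ker g ↔
      (∀ y, (0 ≤ f y → 0 ≤ g y) ∧ (f y ≤ 0 → g y ≤ 0)) ∨
        (∀ y, (0 ≤ f y → g y ≤ 0) ∧ (f y ≤ 0 → 0 ≤ g y)) := by
  constructor
  · intro h
    obtain ⟨c, rfl⟩ := exists_smul_eq_of_ker_le_s13 h
    rcases le_total 0 c with hc | hc
    · exact .inl fun y => ⟨fun hy => mul_nonneg hc hy,
        fun hy => mul_nonpos_of_nonneg_of_nonpos hc hy⟩
    · exact .inr fun y => ⟨fun hy => mul_nonpos_of_nonpos_of_nonneg hc hy,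
        fun hy => mul_nonneg_of_nonpos_of_nonpos hc hy⟩
  · rintro (h | h) y (hy : f y = 0) <;> obtain ⟨h₁, h₂⟩ := h y
    · exact le_antisymm (h₂ hy.le) (h₁ hy.ge)
    · exact le_antisymm (h₁ hy.ge) (h₂ hy.le)

end LinearMap

theorem stmt13_general {X : Type*} [NormedAddCommGroup X] [NormedSpace ℝ X]
    (T : X →L[ℝ] StrongDual ℝ X) (x : X) :
    (∀ y : X, T x y = 0 → T y x = 0) ↔
      ((∀ y : X, (0 ≤ T x y → 0 ≤ T y x) ∧ (T x y ≤ 0 → T y x ≤ 0)) ∨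
       (∀ y : X, (0 ≤ T x y → T y x ≤ 0) ∧ (T x y ≤ 0 → 0 ≤ T y x))) :=
  LinearMap.ker_le_ker_iff_sign (T x : X →ₗ[ℝ] ℝ) (T.flip x : X →ₗ[ℝ] ℝ)

theorem stmt13 {X : Type*} [NormedAddCommGroup X] [NormedSpace ℝ X] [CompleteSpace X]
    (T : X →L[ℝ] StrongDual ℝ X) (x : X) :
    (∀ y : X, T x y = 0 → T y x = 0) ↔
      ((∀ y : X, (0 ≤ T x y → 0 ≤ T y x) ∧ (T x y ≤ 0 → T y x ≤ 0)) ∨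
       (∀ y : X, (0 ≤ T x y → T y x ≤ 0) ∧ (T x y ≤ 0 → 0 ≤ T y x))) :=
  stmt13_general T x
end

section
/- Let T : X → X* be bijective and x ∈ X nonzero. Then x is a smooth point of X if and only if there exists z ∈ X, unique up to nonzero scalar multiplication, such that {y : (Tz)(y) = 0} = {y : x ⊥_B y}. -/
/-!
A support functional `f` at `x` vanishes only on `x^⊥`, and conversely every `y ∈ x^⊥` is
killed by some support functional at `x`: apply Hahn–Banach in `E ⧸ 𝕜 ∙ y`, where `x ⊥_B y`
says precisely that the class of `x` still has norm `‖x‖`. Hence `x` is smooth exactly when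
`x^⊥` is the kernel of a single functional `g`: every support functional then has its kernel
inside `ker g`, so it is a multiple of `g`, and the normalisation `f x = ‖x‖ ^ 2` fixes the
multiple. Through the bijection `T` such functionals are the `T z`, and two of them with the
same kernel are proportional.
-/

open NormedSpace

theorem ContinuousLinearMap.eq_smul_of_ker_le {K V : Type*} [Field K] [TopologicalSpace K]
    [IsTopologicalRing K] [AddCommGroup V] [Module K V] [TopologicalSpace V] {f g : V →L[K] K}
    (h : ∀ v, f v = 0 → g v = 0) {x : V} (hx : g x ≠ 0) : f = (f x / g x) • g := by
  have hg : (g : V →ₗ[K] K) ∈ K ∙ (f : V →ₗ[K] K) := by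
    simpa using mem_span_of_iInf_ker_le_ker (L := fun _ : Unit => (f : V →ₗ[K] K))
      (K := g) (by simpa [SetLike.le_def] using h)
  obtain ⟨c, hc⟩ := Submodule.mem_span_singleton.1 hg
  have hgf (v : V) : g v = c * f v := (LinearMap.congr_fun hc v).symm
  have hc0 : c ≠ 0 := left_ne_zero_of_mul (hgf x ▸ hx)
  have hfx : f x ≠ 0 := right_ne_zero_of_mul (hgf x ▸ hx)
  ext v
  rw [smul_apply, hgf, hgf, smul_eq_mul]
  field_simp

section BirkhoffJames

variable {𝕜 E : Type*} [RCLike 𝕜] [NormedAddCommGroup E] [NormedSpace 𝕜 E]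
  {x y : E} {f g : StrongDual 𝕜 E}

variable (𝕜) in
def BirkhoffOrthogonal (x y : E) : Prop := ∀ lam : 𝕜, ‖x‖ ≤ ‖x + lam • y‖

def IsSupportFunctional (x : E) (f : StrongDual 𝕜 E) : Prop :=
  f x = ((‖f‖ * ‖x‖ : ℝ) : 𝕜) ∧ ‖f‖ = ‖x‖

theorem BirkhoffOrthogonal.zero_right (x : E) : BirkhoffOrthogonal 𝕜 x 0 := by
  simp [BirkhoffOrthogonal]

theorem not_birkhoffOrthogonal_self (hx : x ≠ 0) : ¬BirkhoffOrthogonal 𝕜 x x :=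
  fun h => hx <| by simpa using h (-1)

theorem isSupportFunctional_iff :
    IsSupportFunctional x f ↔ ‖f‖ ≤ ‖x‖ ∧ f x = ((‖x‖ ^ 2 : ℝ) : 𝕜) := by
  refine ⟨fun ⟨hfx, hf⟩ => ⟨hf.le, by rw [hfx, hf, sq]⟩, fun ⟨hf, hfx⟩ => ?_⟩
  have hnorm : ‖f‖ = ‖x‖ := by
    refine le_antisymm hf ?_
    have := f.le_opNorm x
    rw [hfx, RCLike.norm_ofReal, abs_of_nonneg (by positivity), sq] at this
    rcases (norm_nonneg x).eq_or_lt with h0 | h0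
    · rw [← h0]; exact norm_nonneg f
    · exact le_of_mul_le_mul_right this h0
  exact ⟨by rw [hfx, hnorm, sq], hnorm⟩

theorem IsSupportFunctional.birkhoffOrthogonal (hf : IsSupportFunctional x f) (hy : f y = 0) :
    BirkhoffOrthogonal 𝕜 x y := by
  rw [isSupportFunctional_iff] at hf
  intro lam
  rcases (norm_nonneg x).eq_or_lt with h0 | h0
  · rw [← h0]; exact norm_nonneg _
  refine le_of_mul_le_mul_left ?_ h0
  calc ‖x‖ * ‖x‖ = ‖f (x + lam • y)‖ := by
        rw [map_add, map_smul, hy, smul_zero, add_zero, hf.2, RCLike.norm_ofReal,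
          abs_of_nonneg (by positivity), sq]
    _ ≤ ‖f‖ * ‖x + lam • y‖ := f.le_opNorm _
    _ ≤ ‖x‖ * ‖x + lam • y‖ := by gcongr; exact hf.1

theorem norm_mk_span_singleton (h : BirkhoffOrthogonal 𝕜 x y) :
    ‖(Submodule.Quotient.mk x : E ⧸ 𝕜 ∙ y)‖ = ‖x‖ := by
  refine le_antisymm (Submodule.Quotient.norm_mk_le _ x) (QuotientAddGroup.le_norm_iff.2 ?_)
  intro m hm
  obtain ⟨a, ha⟩ := Submodule.mem_span_singleton.1 ((Submodule.Quotient.eq _).1 hm)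
  rw [show m = x + a • y by rw [ha]; abel]
  exact h a

theorem exists_isSupportFunctional_apply_eq_zero (hx : x ≠ 0) (h : BirkhoffOrthogonal 𝕜 x y) :
    ∃ f : StrongDual 𝕜 E, IsSupportFunctional x f ∧ f y = 0 := by
  have : IsClosed ((𝕜 ∙ y : Submodule 𝕜 E) : Set E) := Submodule.closed_of_finiteDimensional _
  have hq := norm_mk_span_singleton h
  obtain ⟨g, hg, hgx⟩ := exists_dual_vector 𝕜 (Submodule.Quotient.mk x : E ⧸ 𝕜 ∙ y)
    (hq ▸ norm_ne_zero_iff.2 hx)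
  refine ⟨(‖x‖ : 𝕜) • g.comp (𝕜 ∙ y).mkQL, isSupportFunctional_iff.2 ⟨?_, ?_⟩, ?_⟩
  · refine ContinuousLinearMap.opNorm_le_bound _ (norm_nonneg x) fun v => ?_
    calc ‖((‖x‖ : 𝕜) • g.comp (𝕜 ∙ y).mkQL) v‖ = ‖x‖ * ‖g (Submodule.Quotient.mk v)‖ := by
          simp
      _ ≤ ‖x‖ * ‖v‖ := by
          gcongr
          exact (g.le_opNorm _).trans (by rw [hg, one_mul]; exact Submodule.Quotient.norm_mk_le _ v)
  · simp [hgx, hq, sq]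
  · have hy : (Submodule.Quotient.mk y : E ⧸ 𝕜 ∙ y) = 0 :=
      (Submodule.Quotient.mk_eq_zero _).2 (Submodule.mem_span_singleton_self y)
    simp [hy]

theorem apply_ne_zero_of_ker_eq (hx : x ≠ 0)
    (hg : {y | g y = 0} = {y | BirkhoffOrthogonal 𝕜 x y}) : g x ≠ 0 :=
  fun h => not_birkhoffOrthogonal_self hx (hg ▸ h : x ∈ {y | BirkhoffOrthogonal 𝕜 x y})

theorem IsSupportFunctional.ker_eq_of_unique (hx : x ≠ 0) (hf : IsSupportFunctional x f)
    (huniq : ∀ g, IsSupportFunctional x g → g = f) :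
    {y | f y = 0} = {y | BirkhoffOrthogonal 𝕜 x y} := by
  ext y
  refine ⟨hf.birkhoffOrthogonal, fun hy => ?_⟩
  obtain ⟨g, hg, hgy⟩ := exists_isSupportFunctional_apply_eq_zero hx hy
  rwa [← huniq g hg]

theorem existsUnique_isSupportFunctional_of_ker_eq (hx : x ≠ 0)
    (hg : {y | g y = 0} = {y | BirkhoffOrthogonal 𝕜 x y}) :
    ∃! f : StrongDual 𝕜 E, IsSupportFunctional x f := by
  have h_eq (f : StrongDual 𝕜 E) (hf : IsSupportFunctional x f) :
      f = (((‖x‖ ^ 2 : ℝ) : 𝕜) / g x) • g := by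
    have hle (y : E) (hy : f y = 0) : g y = 0 :=
      (hg ▸ hf.birkhoffOrthogonal hy : y ∈ {y | g y = 0})
    simpa [(isSupportFunctional_iff.1 hf).2] using
      ContinuousLinearMap.eq_smul_of_ker_le hle (apply_ne_zero_of_ker_eq hx hg)
  obtain ⟨f, hf, -⟩ :=
    exists_isSupportFunctional_apply_eq_zero hx (BirkhoffOrthogonal.zero_right (𝕜 := 𝕜) x)
  exact ⟨f, hf, fun f' hf' => (h_eq f' hf').trans (h_eq f hf).symm⟩

theorem existsUnique_isSupportFunctional_iff (hx : x ≠ 0) :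
    (∃! f : StrongDual 𝕜 E, IsSupportFunctional x f) ↔
      ∃ g : StrongDual 𝕜 E, {y | g y = 0} = {y | BirkhoffOrthogonal 𝕜 x y} :=
  ⟨fun ⟨f, hf, huniq⟩ => ⟨f, hf.ker_eq_of_unique hx huniq⟩,
    fun ⟨_, hg⟩ => existsUnique_isSupportFunctional_of_ker_eq hx hg⟩

end BirkhoffJames

theorem stmt15_general {X : Type*} [NormedAddCommGroup X] [NormedSpace ℂ X]
    (T : X →L[ℂ] StrongDual ℂ X) (hT : Function.Bijective T) (x : X) (hx : x ≠ 0) :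
    (∃! f : StrongDual ℂ X, f x = ((‖f‖ * ‖x‖ : ℝ) : ℂ) ∧ ‖f‖ = ‖x‖) ↔
      ∃ z : X,
        ({y : X | T z y = 0} = {y : X | ∀ lam : ℂ, ‖x‖ ≤ ‖x + lam • y‖}) ∧
        ∀ w : X, ({y : X | T w y = 0} = {y : X | ∀ lam : ℂ, ‖x‖ ≤ ‖x + lam • y‖}) →
          ∃ c : ℂ, c ≠ 0 ∧ w = c • z := by
  refine (existsUnique_isSupportFunctional_iff (𝕜 := ℂ) hx).trans
    ⟨fun ⟨g, hg⟩ => ?_, fun ⟨z, hz, _⟩ => ⟨T z, hz⟩⟩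
  obtain ⟨z, rfl⟩ := hT.2 g
  refine ⟨z, hg, fun w hw => ?_⟩
  have hzx := apply_ne_zero_of_ker_eq hx hg
  refine ⟨T w x / T z x, div_ne_zero (apply_ne_zero_of_ker_eq hx hw) hzx, hT.1 ?_⟩
  rw [map_smul]
  exact ContinuousLinearMap.eq_smul_of_ker_le
    (fun y hy => (hg ▸ hw ▸ hy : y ∈ {y | T z y = 0})) hzx

theorem stmt15 {X : Type*} [NormedAddCommGroup X] [NormedSpace ℂ X] [CompleteSpace X]
    (T : X →L[ℂ] StrongDual ℂ X) (hT : Function.Bijective T) (x : X) (hx : x ≠ 0) :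
    (∃! f : StrongDual ℂ X, f x = ((‖f‖ * ‖x‖ : ℝ) : ℂ) ∧ ‖f‖ = ‖x‖) ↔
      ∃ z : X,
        ({y : X | T z y = 0} = {y : X | ∀ lam : ℂ, ‖x‖ ≤ ‖x + lam • y‖}) ∧
        ∀ w : X, ({y : X | T w y = 0} = {y : X | ∀ lam : ℂ, ‖x‖ ≤ ‖x + lam • y‖}) →
          ∃ c : ℂ, c ≠ 0 ∧ w = c • z :=
  stmt15_general T hT x hx
end

section
/- Let T : X → X* be bijective and A : X → X a bounded linear operator. Then (for all x, y ∈ X: (Tx)(y) = 0 if and only if (TAx)(Ay) = 0) holds if and only if A is a nonzero scalar multiple of a T-isometry, i.e., there exists λ ∈ ℂ, λ ≠ 0, with T = λ A* T A, where A* : X* → X* is the adjoint of A. -/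
/-!
For fixed `x`, the functionals `T x` and `A* T A x` have the same kernel, hence are proportional.
Since `T` is injective, a linear map `A* T A` sending each `x` into the line through `T x` is a
single scalar multiple `c • T`. If `c = 0`, the kernel condition forces `T = 0`; otherwise
`λ = c⁻¹`.
-/

open NormedSpace

namespace LinearMap

variable {K V W : Type*} [Field K] [AddCommGroup V] [Module K V] [AddCommGroup W] [Module K W]

theorem exists_eq_smul_of_ker_le {f g : V →ₗ[K] K} (h : ker f ≤ ker g) :
    ∃ c : K, g = c • f := by
  have hg : g ∈ Submodule.span K (Set.range fun _ : Unit => f) :=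
    mem_span_of_iInf_ker_le_ker (by simpa using h)
  obtain ⟨c, hc⟩ := Submodule.mem_span_singleton.mp (by simpa using hg)
  exact ⟨c, hc.symm⟩

/-- Transported to the endomorphism `φ⁻¹ ∘ ψ` of `V`, the hypothesis says that every vector is an
eigenvector. -/
theorem exists_eq_smul_of_injective_of_forall_exists_smul {φ ψ : V →ₗ[K] W}
    (hφ : Function.Injective φ) (h : ∀ v, ∃ c : K, ψ v = c • φ v) : ∃ c : K, ψ = c • φ := by
  have hrange : ∀ v, ψ v ∈ range φ := fun v => by
    obtain ⟨c, hc⟩ := h v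
    exact ⟨c • v, by rw [map_smul, hc]⟩
  let f : V →ₗ[K] V :=
    (LinearEquiv.ofInjective φ hφ).symm.toLinearMap ∘ₗ ψ.codRestrict _ hrange
  have hf : ∀ v, φ (f v) = ψ v := fun v => by simp [f]
  obtain ⟨a, ha⟩ := f.exists_eq_smul_id_of_forall_notLinearIndependent fun v hli => by
    obtain ⟨c, hc⟩ := h v
    have hfv : f v = c • v := hφ (by rw [hf, hc, map_smul])
    have := LinearIndependent.pair_iff.mp hli c (-1) (by simp [hfv])
    simp at this
  exact ⟨a, ext fun v => by rw [← hf, ha]; simp⟩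

end LinearMap

theorem stmt16_general {X : Type*} [NormedAddCommGroup X] [NormedSpace ℂ X]
    (T : X →L[ℂ] StrongDual ℂ X) (hT : Function.Bijective T) (A : X →L[ℂ] X) :
    (∀ x y : X, T x y = 0 ↔ T (A x) (A y) = 0) ↔
      ∃ lam : ℂ, lam ≠ 0 ∧ ∀ x : X, T x = lam • ((T (A x)).comp A) := by
  constructor
  · intro h
    have hlocal : ∀ x, ∃ c : ℂ, (T (A x)).comp A = c • T x := fun x => by
      obtain ⟨c, hc⟩ := LinearMap.exists_eq_smul_of_ker_le
        (f := (T x : X →ₗ[ℂ] ℂ)) (g := ((T (A x)).comp A : X →ₗ[ℂ] ℂ)) fun y hy => (h x y).mp hy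
      exact ⟨c, ContinuousLinearMap.coe_injective hc⟩
    obtain ⟨c, hc⟩ := LinearMap.exists_eq_smul_of_injective_of_forall_exists_smul
      (φ := (T : X →ₗ[ℂ] StrongDual ℂ X))
      (ψ := ((ContinuousLinearMap.precomp ℂ A).comp (T.comp A) : X →ₗ[ℂ] StrongDual ℂ X))
      hT.1 (by simpa using hlocal)
    have hglobal : ∀ x, (T (A x)).comp A = c • T x := fun x => by
      simpa using LinearMap.congr_fun hc x
    by_cases hc0 : c = 0
    · have hT0 : ∀ x y, T x y = 0 := fun x y => (h x y).mpr (by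
        simpa [hc0] using congrArg (· y) (hglobal x))
      exact ⟨1, one_ne_zero, fun x => by ext y; simp [hT0]⟩
    · exact ⟨c⁻¹, inv_ne_zero hc0, fun x => by rw [hglobal x, inv_smul_smul₀ hc0]⟩
  · rintro ⟨lam, hlam, hE⟩ x y
    rw [hE x]
    simp [hlam]

theorem stmt16 {X : Type*} [NormedAddCommGroup X] [NormedSpace ℂ X] [CompleteSpace X]
    (T : X →L[ℂ] StrongDual ℂ X) (hT : Function.Bijective T) (A : X →L[ℂ] X) :
    (∀ x y : X, T x y = 0 ↔ T (A x) (A y) = 0) ↔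
      ∃ lam : ℂ, lam ≠ 0 ∧ ∀ x : X, T x = lam • ((T (A x)).comp A) :=
  stmt16_general T hT A
end

section
/- Let X = ℓ_p² over ℝ with 1 ≤ p ≤ ∞. Then p = 2 if and only if (α, β) is Birkhoff-James orthogonal to (β, -α) for all (α, β) ∈ ℝ². -/
/-!
For `p = 2` the vector `(β, -α)` is Euclidean-orthogonal to `(α, β)`, and Pythagoras gives the
inequality. Conversely it suffices to test `(1, 2)` against `(2, -1)`. In the sup norm,
`(1, 2) + (1/4) • (2, -1) = (3/2, 7/4)` is shorter than `(1, 2)`. For finite `p`, the function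
`t ↦ ‖(1, 2) + t • (2, -1)‖_p ^ p = |1 + 2t| ^ p + |2 - t| ^ p` has a minimum at `0`, where its
derivative is `p (2 - 2 ^ (p - 1))`; this vanishes only for `p = 2`.
-/

open Filter Topology WithLp
open scoped ENNReal

def IsBirkhoffJamesOrthogonal {E : Type*} [SeminormedAddCommGroup E] [Module ℝ E] (u v : E) :
    Prop :=
  ∀ t : ℝ, ‖u‖ ≤ ‖u + t • v‖

theorem isBirkhoffJamesOrthogonal_of_inner_eq_zero {E : Type*} [NormedAddCommGroup E]
    [InnerProductSpace ℝ E] {u v : E} (h : inner ℝ u v = 0) : IsBirkhoffJamesOrthogonal u v :=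
  fun t ↦ (mul_self_le_mul_self_iff (norm_nonneg _) (norm_nonneg _)).mpr <| by
    rw [norm_add_sq_eq_norm_sq_add_norm_sq_real (by rw [real_inner_smul_right, h, mul_zero])]
    exact le_add_of_nonneg_right (mul_self_nonneg _)

theorem PiLp.norm_le_norm_iff_sum_rpow_le {p : ENNReal} {ι : Type*} [Fintype ι] {β : ι → Type*}
    [∀ i, SeminormedAddCommGroup (β i)] (hp : 0 < p.toReal) (f g : PiLp p β) :
    ‖f‖ ≤ ‖g‖ ↔ ∑ i, ‖f i‖ ^ p.toReal ≤ ∑ i, ‖g i‖ ^ p.toReal := by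
  rw [PiLp.norm_eq_sum hp, PiLp.norm_eq_sum hp]
  exact Real.rpow_le_rpow_iff (by positivity) (by positivity) (by positivity)

theorem not_isBirkhoffJamesOrthogonal_top :
    ¬IsBirkhoffJamesOrthogonal (toLp ∞ ![(1 : ℝ), 2]) (toLp ∞ ![2, -1]) := by
  intro h
  have hlt : ‖![(1 : ℝ), 2] + (1 / 4 : ℝ) • ![2, -1]‖ < 2 :=
    (pi_norm_lt_iff two_pos).mpr <| Fin.forall_fin_two.mpr ⟨by norm_num, by norm_num⟩
  have hle : (2 : ℝ) ≤ ‖![(1 : ℝ), 2]‖ := by simpa using norm_le_pi_norm ![(1 : ℝ), 2] 1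
  have := h (1 / 4)
  rw [← toLp_smul, ← toLp_add, PiLp.norm_toLp, PiLp.norm_toLp] at this
  linarith

theorem eq_two_of_isLocalMin_rpow {r : ℝ} (hr : 0 < r)
    (hmin : IsLocalMin (fun t : ℝ => |1 + 2 * t| ^ r + |2 - t| ^ r) 0) : r = 2 := by
  have hderiv : HasDerivAt (fun t : ℝ => (1 + 2 * t) ^ r + (2 - t) ^ r)
      (2 * r - r * 2 ^ (r - 1)) 0 := by
    have := ((((hasDerivAt_id (0 : ℝ)).const_mul 2).const_add 1).rpow_const (p := r)
      (by norm_num)).add (((hasDerivAt_id (0 : ℝ)).const_sub 2).rpow_const (p := r) (by norm_num))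
    norm_num [← sub_eq_add_neg] at this
    exact this
  have heq : (fun t : ℝ => |1 + 2 * t| ^ r + |2 - t| ^ r) =ᶠ[𝓝 0]
      fun t => (1 + 2 * t) ^ r + (2 - t) ^ r := by
    filter_upwards [Ioo_mem_nhds (by norm_num : (-1 / 2 : ℝ) < 0) (by norm_num : (0 : ℝ) < 2)]
      with t ⟨ht₁, ht₂⟩
    rw [abs_of_pos (by linarith), abs_of_pos (by linarith)]
  have hcrit := hmin.hasDerivAt_eq_zero (hderiv.congr_of_eventuallyEq heq)
  have hpow : (2 : ℝ) ^ (r - 1) = 2 ^ (1 : ℝ) := by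
    rw [Real.rpow_one]
    exact mul_left_cancel₀ hr.ne' (by linarith)
  linarith [(Real.rpow_right_inj two_pos (by norm_num)).mp hpow]

theorem eq_two_of_isBirkhoffJamesOrthogonal {p : ENNReal} [Fact (1 ≤ p)]
    (h : IsBirkhoffJamesOrthogonal (toLp p ![(1 : ℝ), 2]) (toLp p ![2, -1])) : p = 2 := by
  by_cases htop : p = ∞
  · subst htop
    exact absurd h not_isBirkhoffJamesOrthogonal_top
  have hp : 0 < p.toReal :=
    ENNReal.toReal_pos (zero_lt_one.trans_le Fact.out).ne' htop
  have hmin : IsLocalMin (fun t : ℝ => |1 + 2 * t| ^ p.toReal + |2 - t| ^ p.toReal) 0 :=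
    Eventually.of_forall fun t ↦ by
      simpa [Fin.sum_univ_two, mul_comm t, ← sub_eq_add_neg] using
        (PiLp.norm_le_norm_iff_sum_rpow_le hp _ _).mp (h t)
  rw [← ENNReal.ofReal_toReal htop, eq_two_of_isLocalMin_rpow hp hmin]
  simp

theorem stmt18 (p : ENNReal) [Fact (1 ≤ p)] :
    p = 2 ↔
      ∀ α β lam : ℝ,
        ‖(WithLp.equiv p (Fin 2 → ℝ)).symm ![α, β]‖ ≤
          ‖(WithLp.equiv p (Fin 2 → ℝ)).symm ![α, β] +
            lam • (WithLp.equiv p (Fin 2 → ℝ)).symm ![β, -α]‖ := by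
  constructor
  · rintro rfl α β
    refine isBirkhoffJamesOrthogonal_of_inner_eq_zero ?_
    simp only [equiv_symm_apply, PiLp.inner_apply, RCLike.inner_apply, Real.ringHom_apply,
      Fin.sum_univ_two, Matrix.cons_val_zero, Matrix.cons_val_one]
    ring
  · intro h
    exact eq_two_of_isBirkhoffJamesOrthogonal (by simpa [IsBirkhoffJamesOrthogonal] using h 1 2)
end
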